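/- arXiv:2601.14612 — 7 statements merged into one kernel-verified Lean document; each statement's English description precedes it below -/
import Mathlib

section
/- Let K > 1, L > 0, 0 < z and 0 ≤ δ ≤ z. Define CR(α) = (L + (K−1)(L − α(1 − δ/z))) / (L + (K−1)δ(1 − α/z)). Then for every α ∈ [0, z], CR(α) ≤ max{ K·L / (L + (K−1)δ), 1 + (K−1)(1 + δ/L − z/L) }; that is, the supremum of CR over [0, z] is attained at an endpoint and equals max{CR(0), CR(z)}. -/
/-!
In `t = α / z` both the numerator and the denominator of `CR` are affine, so `CR(α)` is the
ratio of the same convex combination `(1 - t, t)` of the endpoint numerators and of the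
endpoint denominators. Such a mediant of two fractions with positive denominators never exceeds
the larger of the two fractions.
-/

theorem weighted_mediant_le_max {𝕜 : Type*} [Field 𝕜] [LinearOrder 𝕜] [IsStrictOrderedRing 𝕜]
    {a b c d s t : 𝕜} (hc : 0 < c) (hd : 0 < d) (hs : 0 ≤ s) (ht : 0 ≤ t)
    (hpos : 0 < s * c + t * d) :
    (s * a + t * b) / (s * c + t * d) ≤ max (a / c) (b / d) := by
  have hac : a ≤ max (a / c) (b / d) * c := (div_le_iff₀ hc).mp (le_max_left _ _)
  have hbd : b ≤ max (a / c) (b / d) * d := (div_le_iff₀ hd).mp (le_max_right _ _)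
  rw [div_le_iff₀ hpos]
  calc s * a + t * b
      ≤ s * (max (a / c) (b / d) * c) + t * (max (a / c) (b / d) * d) := by gcongr
    _ = max (a / c) (b / d) * (s * c + t * d) := by ring

theorem stmt_2_general (K L z δ : ℝ) (hK : 1 < K) (hL : 0 < L) (hz : 0 < z)
    (hδ0 : 0 ≤ δ) :
    ∀ α ∈ Set.Icc (0 : ℝ) z,
      (L + (K - 1) * (L - α * (1 - δ / z))) / (L + (K - 1) * δ * (1 - α / z)) ≤
        max (K * L / (L + (K - 1) * δ)) (1 + (K - 1) * (1 + δ / L - z / L)) := by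
  rintro α ⟨hα0, hαz⟩
  have ht : 0 ≤ α / z := div_nonneg hα0 hz.le
  have hs : 0 ≤ 1 - α / z := sub_nonneg.mpr ((div_le_one hz).mpr hαz)
  have hKδ : 0 ≤ (K - 1) * δ := mul_nonneg (sub_nonneg.mpr hK.le) hδ0
  have hD0 : 0 < L + (K - 1) * δ := by linarith
  have hDα : 0 < L + (K - 1) * δ * (1 - α / z) := by
    have := mul_nonneg hKδ hs
    linarith
  have hnum : L + (K - 1) * (L - α * (1 - δ / z)) =
      (1 - α / z) * (K * L) + α / z * (L + (K - 1) * (L - z + δ)) := by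
    field_simp
    ring
  have hden : L + (K - 1) * δ * (1 - α / z) = (1 - α / z) * (L + (K - 1) * δ) + α / z * L := by
    ring
  have hCRz : 1 + (K - 1) * (1 + δ / L - z / L) = (L + (K - 1) * (L - z + δ)) / L := by
    field_simp
    ring
  rw [hnum, hden, hCRz]
  exact weighted_mediant_le_max hD0 hL hs ht (hden ▸ hDα)

/-- The cost-ratio function is maximized at an endpoint of `[0, z]`:
for every `α ∈ [0, z]`,
`CR(α) ≤ max{ K·L/(L + (K−1)δ), 1 + (K−1)(1 + δ/L − z/L) } = max{CR(0), CR(z)}`. -/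
theorem stmt_2 (K L z δ : ℝ) (hK : 1 < K) (hL : 0 < L) (hz : 0 < z)
    (hδ0 : 0 ≤ δ) (hδz : δ ≤ z) :
    ∀ α ∈ Set.Icc (0 : ℝ) z,
      (L + (K - 1) * (L - α * (1 - δ / z))) / (L + (K - 1) * δ * (1 - α / z)) ≤
        max (K * L / (L + (K - 1) * δ)) (1 + (K - 1) * (1 + δ / L - z / L)) :=
  stmt_2_general K L z δ hK hL hz hδ0
end

section
/- Let K > 1, L > 0 and z > 0. Define δ*(z) = −(1/2)·(L·(K+1)/(K−1) − z) + (1/2)·√( (L·(K+1)/(K−1) − z)² + 4·z·L/(K−1) ). Then δ*(z) satisfies the balance condition K·L·δ*(z) = (L + (K−1)·δ*(z))·(z − δ*(z)), and 0 < δ*(z) < z. -/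
lemma stmt_5_aux (K L z A s : ℝ) (hK : 1 < K) (hL : 0 < L) (hz : 0 < z)
    (hA : A * (K - 1) = L * (K + 1) - z * (K - 1)) (hs0 : 0 < s)
    (hs2 : s ^ 2 * (K - 1) = A ^ 2 * (K - 1) + 4 * z * L) :
    K * L * ((s - A) / 2) = (L + (K - 1) * ((s - A) / 2)) * (z - (s - A) / 2) ∧
      0 < (s - A) / 2 ∧ (s - A) / 2 < z := by
  have hK1 : (0:ℝ) < K - 1 := by linarith
  have hsq : A ^ 2 < s ^ 2 := by nlinarith [mul_pos (mul_pos hz hL) hK1]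
  have hsA : A < s := by nlinarith [hsq, hs0, sq_nonneg (A - s)]
  have hb : 0 < A + 2 * z := by nlinarith [mul_pos hL (by linarith : (0:ℝ) < K + 1)]
  have hsq2 : s ^ 2 < (A + 2 * z) ^ 2 := by
    nlinarith [mul_pos (mul_pos hz hL) (by linarith : (0:ℝ) < K)]
  have hlt : s < A + 2 * z := by nlinarith [hsq2, hs0, hb, sq_nonneg (s - (A + 2 * z))]
  refine ⟨?_, by linarith, by linarith⟩
  linear_combination (1/4 : ℝ) * hs2 - ((s - A) / 2) * hA

/-- The closed-form `δ*(z) = −(1/2)(L(K+1)/(K−1) − z) + (1/2)√((L(K+1)/(K−1) − z)² + 4zL/(K−1))`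
satisfies the balance condition `K·L·δ* = (L + (K−1)δ*)(z − δ*)` and lies in `(0, z)`. -/
theorem stmt_5 (K L z : ℝ) (hK : 1 < K) (hL : 0 < L) (hz : 0 < z) :
    let δStar : ℝ := -(1 / 2) * (L * (K + 1) / (K - 1) - z) +
      (1 / 2) * Real.sqrt ((L * (K + 1) / (K - 1) - z) ^ 2 + 4 * z * L / (K - 1))
    K * L * δStar = (L + (K - 1) * δStar) * (z - δStar) ∧ 0 < δStar ∧ δStar < z := by
  intro δStar
  have hK1 : (0:ℝ) < K - 1 := by linarith
  set A : ℝ := L * (K + 1) / (K - 1) - z with hAdef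
  set D : ℝ := A ^ 2 + 4 * z * L / (K - 1) with hDdef
  have hDpos : 0 < D := by
    have h1 : 0 < 4 * z * L / (K - 1) := by positivity
    have h2 : 0 ≤ A ^ 2 := sq_nonneg A
    rw [hDdef]; linarith
  set s : ℝ := Real.sqrt D with hsdef
  have hs2 : s ^ 2 = D := Real.sq_sqrt hDpos.le
  have hs0 : 0 < s := Real.sqrt_pos.mpr hDpos
  have hA : A * (K - 1) = L * (K + 1) - z * (K - 1) := by
    rw [hAdef]; field_simp
  have hD2 : s ^ 2 * (K - 1) = A ^ 2 * (K - 1) + 4 * z * L := by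
    rw [hs2, hDdef]; field_simp
  have hδ : δStar = (s - A) / 2 := by
    show -(1 / 2) * A + (1 / 2) * s = (s - A) / 2
    ring
  rw [hδ]
  exact stmt_5_aux K L z A s hK hL hz hA hs0 hD2
end

section
/- Let K > 1 and L > 0. The function z ↦ δ*(z) = −(1/2)·(L·(K+1)/(K−1) − z) + (1/2)·√( (L·(K+1)/(K−1) − z)² + 4·z·L/(K−1) ) is strictly increasing on (0, ∞). -/
/-!
With `C = L(K+1)/(K-1)` and `a = L/(K-1)`, `δ*(z)` is the positive root of
`δ² + (C - z) δ = a z`. Solving this for `z` gives `z = (δ² + C δ) / (δ + a)`, a strictly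
increasing function of `δ > 0`, so `δ*` is the inverse of a strictly increasing map.
-/

open Set

noncomputable def posRoot (p c : ℝ) : ℝ :=
  -(1 / 2) * p + (1 / 2) * Real.sqrt (p ^ 2 + 4 * c)

lemma posRoot_sq_add_mul {p c : ℝ} (hc : 0 ≤ p ^ 2 + 4 * c) :
    posRoot p c ^ 2 + p * posRoot p c = c := by
  have hs := Real.sq_sqrt hc
  unfold posRoot
  linear_combination hs / 4

lemma posRoot_pos (p : ℝ) {c : ℝ} (hc : 0 < c) : 0 < posRoot p c := by
  have : p < Real.sqrt (p ^ 2 + 4 * c) :=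
    (le_abs_self p).trans_lt <| Real.sqrt_sq_eq_abs p ▸
      Real.sqrt_lt_sqrt (sq_nonneg p) (by linarith)
  unfold posRoot
  linarith

lemma strictMonoOn_sq_add_mul_div_add {a C : ℝ} (ha : 0 ≤ a) (hC : 0 ≤ C) :
    StrictMonoOn (fun x : ℝ => (x ^ 2 + C * x) / (x + a)) (Ioi 0) := by
  intro x (hx : 0 < x) y (hy : 0 < y) hxy
  rw [div_lt_div_iff₀ (by linarith) (by linarith)]
  have : 0 < (y - x) * (x * y + a * (x + y) + a * C) := by
    apply mul_pos (by linarith); positivity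
  linear_combination this

theorem strictMonoOn_posRoot_sub_mul {a C : ℝ} (ha : 0 < a) (hC : 0 ≤ C) :
    StrictMonoOn (fun z : ℝ => posRoot (C - z) (a * z)) (Ioi 0) := by
  set g : ℝ → ℝ := fun x => (x ^ 2 + C * x) / (x + a)
  have hg_root : ∀ z ∈ Ioi (0 : ℝ), g (posRoot (C - z) (a * z)) = z := by
    intro z (hz : 0 < z)
    have hroot := posRoot_sq_add_mul (p := C - z) (c := a * z) (by positivity)
    have hpos := posRoot_pos (C - z) (mul_pos ha hz)
    simp only [g]
    rw [div_eq_iff (by linarith)]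
    linear_combination hroot
  intro z hz w hw hzw
  by_contra! hle
  have : g _ ≤ g _ := (strictMonoOn_sq_add_mul_div_add ha.le hC).monotoneOn
    (posRoot_pos _ (mul_pos ha hw)) (posRoot_pos _ (mul_pos ha hz)) hle
  rw [hg_root z hz, hg_root w hw] at this
  linarith

/-- The function `z ↦ δ*(z) = −(1/2)(L(K+1)/(K−1) − z) + (1/2)√((L(K+1)/(K−1) − z)² + 4zL/(K−1))`
is strictly increasing on `(0, ∞)`. -/
theorem stmt_6 (K L : ℝ) (hK : 1 < K) (hL : 0 < L) :
    StrictMonoOn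
      (fun z : ℝ => -(1 / 2) * (L * (K + 1) / (K - 1) - z) +
        (1 / 2) * Real.sqrt ((L * (K + 1) / (K - 1) - z) ^ 2 + 4 * z * L / (K - 1)))
      (Set.Ioi (0 : ℝ)) := by
  convert strictMonoOn_posRoot_sub_mul (a := L / (K - 1)) (C := L * (K + 1) / (K - 1))
    (by positivity) (by positivity) using 4 with z
  unfold posRoot
  congr 3
  ring
end

section
/- Let K > 1 and L > 0. Then δ*(L) = L/(1 + √K), i.e. −(1/2)·(L·(K+1)/(K−1) − L) + (1/2)·√( (L·(K+1)/(K−1) − L)² + 4·L²/(K−1) ) = L/(1 + √K). -/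
/-- At `z = L`, the optimal on-demand interval length is `δ*(L) = L/(1 + √K)`. -/
theorem stmt_7 (K L : ℝ) (hK : 1 < K) (hL : 0 < L) :
    -(1 / 2) * (L * (K + 1) / (K - 1) - L) +
      (1 / 2) * Real.sqrt ((L * (K + 1) / (K - 1) - L) ^ 2 + 4 * L ^ 2 / (K - 1)) =
      L / (1 + Real.sqrt K) := by
  set s := Real.sqrt K with hsdef
  have hK0 : (0:ℝ) ≤ K := by linarith
  have hs2 : s ^ 2 = K := Real.sq_sqrt hK0
  have hs1 : 1 < s := by
    nlinarith [Real.sqrt_nonneg K, hs2]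
  have hKm : (0:ℝ) < K - 1 := by linarith
  have harg : (L * (K + 1) / (K - 1) - L) ^ 2 + 4 * L ^ 2 / (K - 1)
      = (2 * L * s / (K - 1)) ^ 2 := by
    field_simp
    linear_combination (-4) * hs2
  rw [harg, Real.sqrt_sq (by positivity)]
  have h1s : (0:ℝ) < 1 + s := by linarith
  field_simp
  nlinarith [hs2]
end

section
/- Let K > 1, L > 0 and L ≤ D ≤ ((1 + 2√K)/(1 + √K))·L, and set δ = L/(1 + √K). Then max{ 1 + (K−1)·δ/L, K/(1 + (K−1)·δ/L), 1 + (K−1)·(2 − D/L) } = 1 + (K−1)·(2 − D/L). In particular 1 + (K−1)·(2 − D/L) ≥ √K, with equality if and only if D = ((1 + 2√K)/(1 + √K))·L. -/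
/-- In the tight-deadline regime `L ≤ D ≤ ((1 + 2√K)/(1 + √K))·L`, with `δ = L/(1 + √K)`,
the maximum of the three cost ratios `1 + (K−1)δ/L`, `K/(1 + (K−1)δ/L)` and
`1 + (K−1)(2 − D/L)` equals `1 + (K−1)(2 − D/L)`; moreover `1 + (K−1)(2 − D/L) ≥ √K`,
with equality iff `D = ((1 + 2√K)/(1 + √K))·L`. -/
theorem stmt_10 (K L D : ℝ) (hK : 1 < K) (hL : 0 < L) (hLD : L ≤ D)
    (hD : D ≤ (1 + 2 * Real.sqrt K) / (1 + Real.sqrt K) * L) :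
    let δ : ℝ := L / (1 + Real.sqrt K)
    max (1 + (K - 1) * δ / L)
        (max (K / (1 + (K - 1) * δ / L)) (1 + (K - 1) * (2 - D / L))) =
      1 + (K - 1) * (2 - D / L) ∧
    Real.sqrt K ≤ 1 + (K - 1) * (2 - D / L) ∧
    (1 + (K - 1) * (2 - D / L) = Real.sqrt K ↔
      D = (1 + 2 * Real.sqrt K) / (1 + Real.sqrt K) * L) := by
  intro δ
  set s := Real.sqrt K with hs
  have hs1 : 1 < s := by
    rw [hs, show (1:ℝ) = Real.sqrt 1 by simp]
    exact Real.sqrt_lt_sqrt zero_le_one hK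
  have hs2 : s ^ 2 = K := Real.sq_sqrt (by linarith : (0:ℝ) ≤ K)
  have hsp : (0:ℝ) < 1 + s := by linarith
  have hL' : L ≠ 0 := ne_of_gt hL
  have h1 : 1 + (K - 1) * δ / L = s := by
    show 1 + (K - 1) * (L / (1 + s)) / L = s
    field_simp
    nlinarith [hs2]
  have h2 : K / (1 + (K - 1) * δ / L) = s := by
    rw [h1, ← hs2]
    field_simp [pow_two]
  have hDL : D / L ≤ (1 + 2 * s) / (1 + s) := by
    rw [div_le_div_iff₀ hL hsp]
    calc D * (1 + s) ≤ ((1 + 2 * s) / (1 + s) * L) * (1 + s) := by nlinarith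
    _ = (1 + 2 * s) * L := by field_simp
  have h3 : s ≤ 1 + (K - 1) * (2 - D / L) := by
    have : (K - 1) / (1 + s) ≤ (K - 1) * (2 - D / L) := by
      have h2D : 1 / (1 + s) ≤ 2 - D / L := by
        have : 2 - (1 + 2 * s) / (1 + s) = 1 / (1 + s) := by field_simp; ring
        linarith
      have := mul_le_mul_of_nonneg_left h2D (by linarith : (0:ℝ) ≤ K - 1)
      calc (K - 1) / (1 + s) = (K - 1) * (1 / (1 + s)) := by ring
        _ ≤ _ := this
    have hKs : 1 + (K - 1) / (1 + s) = s := by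
      field_simp
      nlinarith [hs2]
    linarith
  refine ⟨?_, h3, ?_⟩
  · rw [h1] at h2
    rw [h1, h2, max_eq_right h3, max_eq_right h3]
  · constructor
    · intro h
      have hE : 2 - D / L = 1 / (1 + s) := by
        have hK1 : (0:ℝ) < K - 1 := by linarith
        have : (K - 1) * (2 - D / L) = (K - 1) * (1 / (1 + s)) := by
          have hKs : 1 + (K - 1) * (1 / (1 + s)) = s := by
            field_simp
            nlinarith [hs2]
          linarith
        exact mul_left_cancel₀ (ne_of_gt hK1) this
      have : D / L = (1 + 2 * s) / (1 + s) := by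
        have : 2 - (1 + 2 * s) / (1 + s) = 1 / (1 + s) := by field_simp; ring
        linarith
      field_simp at this ⊢
      linarith [this]
    · intro h
      rw [h]
      have hDL' : ((1 + 2 * s) / (1 + s) * L) / L = (1 + 2 * s) / (1 + s) := by
        field_simp
      rw [hDL']
      have : 2 - (1 + 2 * s) / (1 + s) = 1 / (1 + s) := by field_simp; ring
      rw [this]
      field_simp
      nlinarith [hs2]
end

section
/- Let L > 0, 0 ≤ T ≤ D and let p : ℝ → ℝ be integrable on [0, D] with 0 ≤ p(t) ≤ 1 for all t ∈ [0, D]. Suppose T ≤ D − L + ∫₀^T p(t) dt. Then ∫₀^T (1 − p(t)) dt ≤ D − L, and hence for every K ≥ 1, L + (K−1)·(L − ∫₀^T (1 − p(t)) dt) ≥ L·(1 + (K−1)·(2 − D/L)). -/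
open MeasureTheory

theorem intervalIntegral_one_sub {p : ℝ → ℝ} {a b : ℝ} (hp : IntervalIntegrable p volume a b) :
    ∫ t in a..b, (1 - p t) = (b - a) - ∫ t in a..b, p t := by
  rw [intervalIntegral.integral_sub intervalIntegrable_const hp, intervalIntegral.integral_const,
    smul_eq_mul, mul_one]

theorem mul_one_add_sub_one_mul_two_sub_div_le {L D I K : ℝ} (hL : 0 < L) (hK : 1 ≤ K)
    (hI : I ≤ D - L) : L * (1 + (K - 1) * (2 - D / L)) ≤ L + (K - 1) * (L - I) := by
  have hexpand : L * (1 + (K - 1) * (2 - D / L)) = L + (K - 1) * (2 * L - D) := by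
    field_simp
  rw [hexpand]
  have := mul_le_mul_of_nonneg_left (by linarith : 2 * L - D ≤ L - I) (sub_nonneg.2 hK)
  linarith

theorem stmt_13_general (L T D : ℝ) (hL : 0 < L) (hT : 0 ≤ T) (hTD : T ≤ D)
    (p : ℝ → ℝ) (hint : IntervalIntegrable p volume 0 D)
    (hfeas : T ≤ D - L + ∫ t in (0 : ℝ)..T, p t) :
    (∫ t in (0 : ℝ)..T, (1 - p t)) ≤ D - L ∧
      ∀ K : ℝ, 1 ≤ K →
        L * (1 + (K - 1) * (2 - D / L)) ≤
          L + (K - 1) * (L - ∫ t in (0 : ℝ)..T, (1 - p t)) := by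
  have hintT : IntervalIntegrable p volume 0 T :=
    hint.mono_set (Set.uIcc_subset_uIcc_left (Set.mem_uIcc_of_le hT hTD))
  have hspot : ∫ t in (0 : ℝ)..T, (1 - p t) ≤ D - L := by
    rw [intervalIntegral_one_sub hintT]
    linarith
  exact ⟨hspot, fun K hK => mul_one_add_sub_one_mul_two_sub_div_le hL hK hspot⟩

/-- Tight-deadline lower bound in the fluid model: if `T ≤ D − L + ∫₀^T p(t) dt`, then
`∫₀^T (1 − p(t)) dt ≤ D − L`, and hence for every `K ≥ 1`,
`L + (K−1)(L − ∫₀^T (1 − p(t)) dt) ≥ L(1 + (K−1)(2 − D/L))`. -/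
theorem stmt_13 (L T D : ℝ) (hL : 0 < L) (hT : 0 ≤ T) (hTD : T ≤ D)
    (p : ℝ → ℝ) (hint : IntervalIntegrable p volume 0 D)
    (hp : ∀ t ∈ Set.Icc (0 : ℝ) D, 0 ≤ p t ∧ p t ≤ 1)
    (hfeas : T ≤ D - L + ∫ t in (0 : ℝ)..T, p t) :
    (∫ t in (0 : ℝ)..T, (1 - p t)) ≤ D - L ∧
      ∀ K : ℝ, 1 ≤ K →
        L * (1 + (K - 1) * (2 - D / L)) ≤
          L + (K - 1) * (L - ∫ t in (0 : ℝ)..T, (1 - p t)) :=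
  stmt_13_general L T D hL hT hTD p hint hfeas
end

section
/- Let K > 1, L > 0, 0 < z, 0 ≤ δ ≤ z, and suppose the balance condition K·L·δ = (L + (K−1)δ)(z − δ) holds. Then for every α ∈ [0, z], (L + (K−1)(L − α(1 − δ/z))) / (L + (K−1)δ(1 − α/z)) = K·L / (L + (K−1)δ); that is, under the balance condition the cost-ratio function is constant in α. -/
/-!
Both numerator and denominator of the cost ratio are affine in `α`: the numerator is
`K L - (K-1)(1 - δ/z) α` and the denominator `L + (K-1)δ - (K-1)(δ/z) α`. A ratio
`(a - b α) / (c - d α)` is independent of `α` exactly when the coefficient vectors are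
proportional, `a d = b c`, and for the cost ratio this proportionality is the balance condition.
-/

theorem div_sub_mul_div_sub_mul_eq_div {F : Type*} [Field F] {a b c d x : F} (hc : c ≠ 0)
    (hx : c - d * x ≠ 0) (h : a * d = b * c) : (a - b * x) / (c - d * x) = a / c := by
  rw [div_eq_div_iff hx hc]
  linear_combination x * h

theorem stmt_15_general (K L z δ : ℝ) (hK : 1 < K) (hL : 0 < L) (hz : 0 < z)
    (hδ0 : 0 ≤ δ)
    (hbal : K * L * δ = (L + (K - 1) * δ) * (z - δ)) :
    ∀ α ∈ Set.Icc (0 : ℝ) z,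
      (L + (K - 1) * (L - α * (1 - δ / z))) / (L + (K - 1) * δ * (1 - α / z)) =
        K * L / (L + (K - 1) * δ) := by
  rintro α ⟨-, hαz⟩
  have hK1 : 0 < K - 1 := sub_pos.mpr hK
  have hden : 0 < L + (K - 1) * δ := by positivity
  have hdenα : 0 < L + (K - 1) * δ * (1 - α / z) := by
    have : 0 ≤ 1 - α / z := sub_nonneg.mpr ((div_le_one hz).mpr hαz)
    positivity
  have hprop : K * L * ((K - 1) * δ / z) = (K - 1) * (1 - δ / z) * (L + (K - 1) * δ) := by
    field_simp
    linear_combination hbal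
  calc _ = (K * L - (K - 1) * (1 - δ / z) * α) / (L + (K - 1) * δ - (K - 1) * δ / z * α) := by
        congr 1 <;> ring
    _ = _ := div_sub_mul_div_sub_mul_eq_div hden.ne' (by convert hdenα.ne' using 1; ring) hprop

/-- Under the balance condition `K·L·δ = (L + (K−1)δ)(z − δ)`, the cost-ratio function
is constant in `α`: for every `α ∈ [0, z]`,
`(L + (K−1)(L − α(1 − δ/z))) / (L + (K−1)δ(1 − α/z)) = K·L/(L + (K−1)δ)`. -/
theorem stmt_15 (K L z δ : ℝ) (hK : 1 < K) (hL : 0 < L) (hz : 0 < z)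
    (hδ0 : 0 ≤ δ) (hδz : δ ≤ z)
    (hbal : K * L * δ = (L + (K - 1) * δ) * (z - δ)) :
    ∀ α ∈ Set.Icc (0 : ℝ) z,
      (L + (K - 1) * (L - α * (1 - δ / z))) / (L + (K - 1) * δ * (1 - α / z)) =
        K * L / (L + (K - 1) * δ) :=
  stmt_15_general K L z δ hK hL hz hδ0 hbal
end
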